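/- arXiv:cs/0207085 — 4 statements merged into one kernel-verified Lean document; each statement's English description precedes it below -/
import Mathlib

section
/- Let (D, IC) be a database and let M be a two-valued model of IC. Define the three-valued valuation N by N(p) = H^D(p) ⊕ M(p) for every atom p (identifying the two-valued truth values with the elements t, f of THREE). Then N is a three-valued model of D ∪ IC (viewing each atom of D as a formula), and, setting Insert = N^⊤ \ D and Retract = N^⊤ ∩ D, the pair (Insert, Retract) is a repair of (D, IC). -/
/-- Propositional formulas built from atoms using negation, conjunction and disjunction. -/
inductive Fmla (α : Type) : Type where
  | atom : α → Fmla α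
  | neg  : Fmla α → Fmla α
  | conj : Fmla α → Fmla α → Fmla α
  | disj : Fmla α → Fmla α → Fmla α

/-- Two-valued satisfaction; a two-valued valuation is identified with its set of
true atoms `M` (so `M^t = M`, and the minimal Herbrand model `H^D` is `D` itself). -/
def sat2 {α : Type} (M : Set α) : Fmla α → Prop
  | .atom p => p ∈ M
  | .neg φ => ¬ sat2 M φ
  | .conj φ ψ => sat2 M φ ∧ sat2 M ψ
  | .disj φ ψ => sat2 M φ ∨ sat2 M ψ

/-- `M` is a two-valued model of the set of formulas `T`. -/
def models2 {α : Type} (M : Set α) (T : Set (Fmla α)) : Prop := ∀ φ ∈ T, sat2 M φ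

/-- `(D, IC)` is a database: `IC` is a finite, classically consistent set of formulas. -/
def IsDatabase {α : Type} (_D : Set α) (IC : Set (Fmla α)) : Prop :=
  IC.Finite ∧ ∃ M : Set α, models2 M IC

/-- The database `(D, IC)` is consistent: every formula of `IC` follows from `D`,
i.e. is satisfied by the minimal Herbrand model of `D`. -/
def IsConsistentDB {α : Type} (D : Set α) (IC : Set (Fmla α)) : Prop := models2 D IC

/-- `(I, R)` is a repair of the database `(D, IC)`. -/
def IsRepair {α : Type} (D : Set α) (IC : Set (Fmla α)) (I R : Set α) : Prop :=
  I ∩ D = ∅ ∧ R ⊆ D ∧ IsConsistentDB ((D ∪ I) \ R) IC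

/-- The three-valued structure THREE = {t, f, ⊤}. -/
inductive Three : Type where
  | tt | ff | top
  deriving DecidableEq

namespace Three

/-- Position in the truth order `f ≤_t ⊤ ≤_t t`. -/
def rank : Three → ℕ
  | ff => 0 | top => 1 | tt => 2

/-- Conjunction: meet w.r.t. the truth order. -/
def and3 (a b : Three) : Three := if rank a ≤ rank b then a else b

/-- Disjunction: join w.r.t. the truth order. -/
def or3 (a b : Three) : Three := if rank a ≤ rank b then b else a

/-- Negation: swaps `t` and `f`, fixes `⊤`. -/
def neg3 : Three → Three | tt => ff | ff => tt | top => top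

/-- `x ⊕ y`: the least upper bound w.r.t. the knowledge order. -/
def oplus (a b : Three) : Three := if a = b then a else top

/-- The knowledge order `≤_k`: `f` and `t` incomparable, both below `⊤`. -/
def kle (a b : Three) : Prop := a = b ∨ b = top

/-- The designated truth values are `t` and `⊤`. -/
def designated (a : Three) : Prop := a ≠ ff

end Three

/-- Three-valued evaluation of formulas. -/
def eval3 {α : Type} (ν : α → Three) : Fmla α → Three
  | .atom p => ν p
  | .neg φ => Three.neg3 (eval3 ν φ)
  | .conj φ ψ => Three.and3 (eval3 ν φ) (eval3 ν ψ)
  | .disj φ ψ => Three.or3 (eval3 ν φ) (eval3 ν ψ)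

/-- `ν` is a three-valued model of the set of formulas `T`. -/
def models3 {α : Type} (ν : α → Three) (T : Set (Fmla α)) : Prop :=
  ∀ φ ∈ T, Three.designated (eval3 ν φ)

open Classical in
/-- The two-valued valuation with true-set `M`, viewed inside THREE. -/
noncomputable def toThree {α : Type} (M : Set α) (p : α) : Three :=
  if p ∈ M then Three.tt else Three.ff

/-- `ν^⊤`: the atoms assigned `⊤` by `ν`. -/
def topSet {α : Type} (ν : α → Three) : Set α := {p | ν p = Three.top}

/-- `ν ≥_k μ` pointwise. -/
def kge {α : Type} (ν μ : α → Three) : Prop := ∀ p, Three.kle (μ p) (ν p)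

/-- The valuation `H^D ⊕ M` (pointwise `⊕`). -/
noncomputable def herbOplus {α : Type} (D M : Set α) : α → Three :=
  fun p => Three.oplus (toThree D p) (toThree M p)

/-- `M^DB = { N | N ≥_k H^D ⊕ M for some two-valued model M of IC }`. -/
def MDB {α : Type} (D : Set α) (IC : Set (Fmla α)) : Set (α → Three) :=
  {N | ∃ M : Set α, models2 M IC ∧ kge N (herbOplus D M)}

/-- The atoms of `D`, viewed as formulas. -/
def atomsOf {α : Type} (D : Set α) : Set (Fmla α) := Fmla.atom '' D

/-- `(I, R)` is a `≤_i`-preferred repair of `(D, IC)`: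
`(I', R') ≤_i (I, R)` iff `I ⊆ I'` and `R ⊆ R'`. -/
def IsPreferredRepairI {α : Type} (D : Set α) (IC : Set (Fmla α)) (I R : Set α) : Prop :=
  IsRepair D IC I R ∧
    ∀ I' R', IsRepair D IC I' R' → (I' ⊆ I ∧ R' ⊆ R) → (I ⊆ I' ∧ R ⊆ R')

/-- `(I, R)` is a `≤_c`-preferred repair of `(D, IC)`:
`(I', R') ≤_c (I, R)` iff `|I| + |R| ≤ |I'| + |R'|`. -/
def IsPreferredRepairC {α : Type} (D : Set α) (IC : Set (Fmla α)) (I R : Set α) : Prop :=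
  IsRepair D IC I R ∧
    ∀ I' R', IsRepair D IC I' R' → I'.ncard + R'.ncard ≤ I.ncard + R.ncard →
      I.ncard + R.ncard ≤ I'.ncard + R'.ncard

/-- `N` is `≤_i`-maximally consistent in `S`: no `N' ∈ S` has `N'^⊤ ⊊ N^⊤`. -/
def MaxConsI {α : Type} (S : Set (α → Three)) (N : α → Three) : Prop :=
  N ∈ S ∧ ¬ ∃ N' ∈ S, topSet N' ⊂ topSet N

/-- `N` is `≤_c`-maximally consistent in `S`: no `N' ∈ S` has `#(N'^⊤) < #(N^⊤)`. -/
def MaxConsC {α : Type} (S : Set (α → Three)) (N : α → Three) : Prop :=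
  N ∈ S ∧ ¬ ∃ N' ∈ S, (topSet N').ncard < (topSet N).ncard

/-
Both `H^D` and `M` lie `≤_k`-below `N = H^D ⊕ M`, and three-valued evaluation is monotone in the
knowledge order while designated values are closed upwards in it; so `N` inherits the models
`H^D ⊨ D` and `M ⊨ IC`. The atoms `N` sends to `⊤` are those on which `D` and `M` disagree, i.e.
`N^⊤ = D ∆ M`, and then `(D ∪ (N^⊤ \ D)) \ (N^⊤ ∩ D) = M`, which satisfies `IC`.
-/

namespace Three

instance : Fintype Three :=
  ⟨{tt, ff, top}, fun x => by cases x <;> simp⟩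

instance (a b : Three) : Decidable (kle a b) := inferInstanceAs (Decidable (_ ∨ _))

theorem neg3_kle_neg3 : ∀ a b : Three, kle a b → kle (neg3 a) (neg3 b) := by decide

theorem and3_kle_and3 : ∀ a a' b b' : Three, kle a a' → kle b b' →
    kle (and3 a b) (and3 a' b') := by decide

theorem or3_kle_or3 : ∀ a a' b b' : Three, kle a a' → kle b b' →
    kle (or3 a b) (or3 a' b') := by decide

theorem designated_of_kle {a b : Three} (hab : kle a b) (ha : designated a) : designated b := by
  rcases hab with rfl | rfl
  · exact ha
  · exact Three.noConfusion

theorem kle_oplus_left (a b : Three) : kle a (oplus a b) := by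
  unfold oplus; split_ifs <;> simp [kle]

theorem kle_oplus_right (a b : Three) : kle b (oplus a b) := by
  unfold oplus; split_ifs with h <;> simp [kle, h]

end Three

section Valuations

variable {α : Type}

theorem eval3_kle_of_kge {μ ν : α → Three} (h : kge ν μ) (φ : Fmla α) :
    Three.kle (eval3 μ φ) (eval3 ν φ) := by
  induction φ with
  | atom p => exact h p
  | neg φ ih => exact Three.neg3_kle_neg3 _ _ ih
  | conj φ ψ ih₁ ih₂ => exact Three.and3_kle_and3 _ _ _ _ ih₁ ih₂
  | disj φ ψ ih₁ ih₂ => exact Three.or3_kle_or3 _ _ _ _ ih₁ ih₂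

theorem models3_of_kge {μ ν : α → Three} {T : Set (Fmla α)} (h : kge ν μ) (hμ : models3 μ T) :
    models3 ν T :=
  fun φ hφ => Three.designated_of_kle (eval3_kle_of_kge h φ) (hμ φ hφ)

open Classical in
theorem eval3_toThree (M : Set α) (φ : Fmla α) :
    eval3 (toThree M) φ = if sat2 M φ then Three.tt else Three.ff := by
  induction φ with
  | atom p => rfl
  | neg φ ih =>
    simp only [eval3, sat2, ih]
    by_cases h : sat2 M φ <;> simp [h, Three.neg3]
  | conj φ ψ ih₁ ih₂ =>
    simp only [eval3, sat2, ih₁, ih₂]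
    by_cases h₁ : sat2 M φ <;> by_cases h₂ : sat2 M ψ <;> simp [h₁, h₂, Three.and3, Three.rank]
  | disj φ ψ ih₁ ih₂ =>
    simp only [eval3, sat2, ih₁, ih₂]
    by_cases h₁ : sat2 M φ <;> by_cases h₂ : sat2 M ψ <;> simp [h₁, h₂, Three.or3, Three.rank]

theorem models3_toThree_of_models2 {M : Set α} {T : Set (Fmla α)} (hM : models2 M T) :
    models3 (toThree M) T := by
  intro φ hφ
  simp [eval3_toThree, hM φ hφ, Three.designated]

theorem models2_atomsOf (D : Set α) : models2 D (atomsOf D) := by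
  rintro _ ⟨p, hp, rfl⟩
  exact hp

theorem kge_herbOplus_left (D M : Set α) : kge (herbOplus D M) (toThree D) :=
  fun _ => Three.kle_oplus_left _ _

theorem kge_herbOplus_right (D M : Set α) : kge (herbOplus D M) (toThree M) :=
  fun _ => Three.kle_oplus_right _ _

theorem topSet_herbOplus (D M : Set α) : topSet (herbOplus D M) = symmDiff D M := by
  ext p
  by_cases hD : p ∈ D <;> by_cases hM : p ∈ M <;>
    simp [topSet, herbOplus, Three.oplus, toThree, Set.mem_symmDiff, hD, hM]

theorem isRepair_symmDiff {D M : Set α} {IC : Set (Fmla α)} (hM : models2 M IC) :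
    IsRepair D IC (symmDiff D M \ D) (symmDiff D M ∩ D) := by
  refine ⟨Set.sdiff_inter_self, Set.inter_subset_right, ?_⟩
  have hM_eq : (D ∪ (symmDiff D M \ D)) \ (symmDiff D M ∩ D) = M := by
    ext p
    by_cases hD : p ∈ D <;> by_cases hM : p ∈ M <;> simp [Set.mem_symmDiff, hD, hM]
  rw [IsConsistentDB, hM_eq]
  exact hM

end Valuations

theorem three_valued_model_gives_repair_general {α : Type} (D : Set α) (IC : Set (Fmla α))
    (M : Set α) (hM : models2 M IC) :
    models3 (herbOplus D M) (atomsOf D ∪ IC) ∧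
      IsRepair D IC (topSet (herbOplus D M) \ D) (topSet (herbOplus D M) ∩ D) := by
  refine ⟨fun φ hφ => ?_, topSet_herbOplus D M ▸ isRepair_symmDiff hM⟩
  rcases hφ with hφ | hφ
  · exact models3_of_kge (kge_herbOplus_left D M)
      (models3_toThree_of_models2 (models2_atomsOf D)) φ hφ
  · exact models3_of_kge (kge_herbOplus_right D M) (models3_toThree_of_models2 hM) φ hφ

/-- Proposition 3: for a two-valued model `M` of `IC`, the
three-valued valuation `N = H^D ⊕ M` is a three-valued model of `D ∪ IC`, and
`(N^⊤ \ D, N^⊤ ∩ D)` is a repair of `(D, IC)`. -/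
theorem three_valued_model_gives_repair {α : Type} (D : Set α) (IC : Set (Fmla α))
    (hDB : IsDatabase D IC) (M : Set α) (hM : models2 M IC) :
    models3 (herbOplus D M) (atomsOf D ∪ IC) ∧
      IsRepair D IC (topSet (herbOplus D M) \ D) (topSet (herbOplus D M) ∩ D) :=
  three_valued_model_gives_repair_general D IC M hM
end

section
/- Let (D, IC) be a database. If N is a ≤_i-maximally consistent element of M^DB = { N | N ≥_k H^D ⊕ M for some two-valued model M of IC }, then (Insert^N, Retract^N) = (N^⊤ \ D, N^⊤ ∩ D) is a ≤_i-preferred repair of (D, IC). -/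

lemma herb_topSet {α : Type} (D M : Set α) :
    topSet (herbOplus D M) = {p | ¬ (p ∈ D ↔ p ∈ M)} := by
  ext p
  simp only [topSet, herbOplus, toThree, Three.oplus, Set.mem_setOf_eq]
  by_cases hD : p ∈ D <;> by_cases hM : p ∈ M <;> simp [hD, hM]

lemma herb_mem_MDB {α : Type} {D M : Set α} {IC : Set (Fmla α)}
    (hM : models2 M IC) : herbOplus D M ∈ MDB D IC :=
  ⟨M, hM, fun _ => Or.inl rfl⟩

lemma topSet_eq_of_max {α : Type} {D M : Set α} {IC : Set (Fmla α)}
    {N : α → Three} (hmax : MaxConsI (MDB D IC) N)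
    (hM : models2 M IC) (hsub : topSet (herbOplus D M) ⊆ topSet N) :
    topSet (herbOplus D M) = topSet N := by
  by_contra h
  exact hmax.2 ⟨herbOplus D M, herb_mem_MDB hM, ssubset_of_subset_of_ne hsub h⟩

/-- Proposition 5: if `N` is `≤_i`-maximally consistent in `M^DB`,
then `(N^⊤ \ D, N^⊤ ∩ D)` is a `≤_i`-preferred repair of `(D, IC)`. -/
theorem preferredI_of_maxConsI {α : Type} (D : Set α) (IC : Set (Fmla α))
    (hDB : IsDatabase D IC) (N : α → Three) (hN : MaxConsI (MDB D IC) N) :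
    IsPreferredRepairI D IC (topSet N \ D) (topSet N ∩ D) := by 
  obtain ⟨⟨M, hM, hk⟩, hmax'⟩ := hN
  have hmax : MaxConsI (MDB D IC) N := ⟨⟨M, hM, hk⟩, hmax'⟩
  have hsub : topSet (herbOplus D M) ⊆ topSet N := by
    intro p hp
    rcases hk p with h | h
    · simpa [topSet, ← h] using hp
    · exact h
  have hS : topSet N = {p | ¬ (p ∈ D ↔ p ∈ M)} := by
    rw [← topSet_eq_of_max hmax hM hsub, herb_topSet]
  have hSiff : ∀ p, p ∈ topSet N ↔ ¬ (p ∈ D ↔ p ∈ M) := fun p => by rw [hS]; rfl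
  constructor
  · refine ⟨?_, Set.inter_subset_right, ?_⟩
    · ext p; simp only [Set.mem_inter_iff, Set.mem_diff, Set.mem_empty_iff_false, iff_false]
      tauto
    · have : (D ∪ (topSet N \ D)) \ (topSet N ∩ D) = M := by
        ext p
        have := hSiff p
        simp only [Set.mem_diff, Set.mem_union, Set.mem_inter_iff] at *
        by_cases hD : p ∈ D <;> by_cases hMp : p ∈ M <;> simp_all
      rw [this]; exact hM
  · rintro I' R' ⟨hI'D, hR'D, hcons'⟩ ⟨hI's, hR's⟩
    have hI'notD : ∀ p ∈ I', p ∉ D := by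
      intro p hp hd
      exact absurd (Set.mem_inter hp hd) (by rw [hI'D]; exact fun h => h)
    set M' := (D ∪ I') \ R' with hM'def
    have hM' : models2 M' IC := hcons'
    have hkey : topSet (herbOplus D M') = I' ∪ R' := by
      rw [herb_topSet]
      ext p
      simp only [Set.mem_setOf_eq, Set.mem_union, hM'def, Set.mem_diff]
      by_cases hD : p ∈ D
      · have hnI : p ∉ I' := fun h => hI'notD p h hD
        by_cases hR : p ∈ R' <;> simp_all
      · have hnR : p ∉ R' := fun h => hD (hR'D h)
        by_cases hI : p ∈ I' <;> simp_all
    have hsub' : topSet (herbOplus D M') ⊆ topSet N := by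
      rw [hkey]
      exact Set.union_subset (fun p hp => (hI's hp).1) (fun p hp => (hR's hp).1)
    have heq : I' ∪ R' = topSet N := by rw [← hkey]; exact topSet_eq_of_max hmax hM' hsub'
    constructor
    · intro p hp
      have : p ∈ I' ∪ R' := heq ▸ hp.1
      rcases this with h | h
      · exact h
      · exact absurd (hR'D h) hp.2
    · intro p hp
      have : p ∈ I' ∪ R' := heq ▸ hp.1
      rcases this with h | h
      · exact absurd hp.2 (hI'notD p h)
      · exact h
end

section
/- Let (D, IC) be a database over a finite set of atoms and suppose (Insert, Retract) is a ≤_c-preferred repair of (D, IC). Then there is a ≤_c-maximally consistent element N of M^DB = { N | N ≥_k H^D ⊕ M for some two-valued model M of IC } such that Insert = Insert^N = N^⊤ \ D and Retract = Retract^N = N^⊤ ∩ D. -/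
lemma kge_diff {α : Type} {N : α → Three} {D M : Set α} (h : kge N (herbOplus D M))
    {p : α} (hp : ¬ (p ∈ D ↔ p ∈ M)) : N p = Three.top := by
  have hD : toThree D p ≠ toThree M p := by
    unfold toThree
    by_cases h1 : p ∈ D <;> by_cases h2 : p ∈ M <;> simp [h1, h2] <;> tauto
  have hcore : herbOplus D M p = Three.top := by
    unfold herbOplus Three.oplus
    simp [hD]
  rcases h p with h' | h'
  · rw [← hcore, h']
  · exact h'

/-- over a finite set of atoms, every `≤_c`-preferred repair of
`(D, IC)` arises from a `≤_c`-maximally consistent element `N` of `M^DB` as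
`(N^⊤ \ D, N^⊤ ∩ D)`. -/
theorem maxConsC_of_preferredC {α : Type} [Fintype α] (D : Set α) (IC : Set (Fmla α))
    (hDB : IsDatabase D IC) (I R : Set α) (h : IsPreferredRepairC D IC I R) :
    ∃ N : α → Three, MaxConsC (MDB D IC) N ∧ I = topSet N \ D ∧ R = topSet N ∩ D := by
  classical
  obtain ⟨⟨hID, hRD, hM⟩, hpref⟩ := h
  set M : Set α := (D ∪ I) \ R with hMdef
  set N : α → Three := fun p => if p ∈ I ∪ R then Three.top else toThree D p with hN
  have hIR : ∀ p, p ∈ I → p ∉ D := by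
    intro p hp hpd
    have : p ∈ I ∩ D := ⟨hp, hpd⟩
    rw [hID] at this; exact this
  have htop : topSet N = I ∪ R := by
    ext p
    simp only [topSet, Set.mem_setOf_eq, hN]
    by_cases hp : p ∈ I ∪ R
    · rw [if_pos hp]; simpa using hp
    · rw [if_neg hp]
      constructor
      · intro h'; unfold toThree at h'; by_cases hd : p ∈ D <;> simp [hd] at h'
      · intro h'; exact absurd h' hp
  have hNmem : N ∈ MDB D IC := by
    refine ⟨M, hM, ?_⟩
    intro p
    by_cases hp : p ∈ I ∪ R
    · right; simp only [hN]; rw [if_pos hp]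
    · left
      have hpIR : p ∉ I ∧ p ∉ R := by
        simpa only [Set.mem_union, not_or] using hp
      have hiff : p ∈ M ↔ p ∈ D := by
        simp only [hMdef, Set.mem_diff, Set.mem_union]
        tauto
      have hMD : toThree M p = toThree D p := by
        unfold toThree; by_cases hd : p ∈ D <;> simp [hd, hiff] <;> tauto
      simp only [hN]; rw [if_neg hp]
      simp [herbOplus, Three.oplus, hMD]
  have hdisj : Disjoint I R := by
    rw [Set.disjoint_iff_inter_eq_empty]
    ext p; simp only [Set.mem_inter_iff, Set.mem_empty_iff_false, iff_false]
    rintro ⟨hpi, hpr⟩; exact hIR p hpi (hRD hpr)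
  have hcard : (topSet N).ncard = I.ncard + R.ncard := by
    rw [htop, Set.ncard_union_eq hdisj (Set.toFinite I) (Set.toFinite R)]
  refine ⟨N, ⟨hNmem, ?_⟩, ?_, ?_⟩
  · rintro ⟨N', ⟨M', hM', hk⟩, hlt⟩
    set I' : Set α := M' \ D with hI'
    set R' : Set α := D \ M' with hR'
    have hrep : IsRepair D IC I' R' := by
      refine ⟨?_, Set.diff_subset, ?_⟩
      · ext p
        simp only [hI', Set.mem_inter_iff, Set.mem_diff, Set.mem_empty_iff_false, iff_false]
        tauto
      · have heq : (D ∪ I') \ R' = M' := by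
          ext p; simp only [hI', hR', Set.mem_diff, Set.mem_union]; tauto
        rw [IsConsistentDB, heq]; exact hM'
    have hsub : I' ∪ R' ⊆ topSet N' := by
      rintro p (⟨h1, h2⟩ | ⟨h1, h2⟩)
      · exact kge_diff hk (fun hiff => h2 (hiff.mpr h1))
      · exact kge_diff hk (fun hiff => h2 (hiff.mp h1))
    have hdisj' : Disjoint I' R' := by
      rw [Set.disjoint_iff_inter_eq_empty]
      ext p
      simp only [hI', hR', Set.mem_inter_iff, Set.mem_diff, Set.mem_empty_iff_false, iff_false]
      tauto
    have hle : I'.ncard + R'.ncard ≤ (topSet N').ncard := by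
      rw [← Set.ncard_union_eq hdisj' (Set.toFinite I') (Set.toFinite R')]
      exact Set.ncard_le_ncard hsub (Set.toFinite _)
    have hlt' : I'.ncard + R'.ncard < I.ncard + R.ncard := by
      calc I'.ncard + R'.ncard ≤ (topSet N').ncard := hle
        _ < (topSet N).ncard := hlt
        _ = I.ncard + R.ncard := hcard
    have := hpref I' R' hrep (le_of_lt hlt')
    omega
  · rw [htop]
    ext p; simp only [Set.mem_diff, Set.mem_union]
    constructor
    · intro hp; exact ⟨Or.inl hp, hIR p hp⟩
    · rintro ⟨hp | hp, hd⟩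
      · exact hp
      · exact absurd (hRD hp) hd
  · rw [htop]
    ext p; simp only [Set.mem_inter_iff, Set.mem_union]
    constructor
    · intro hp; exact ⟨Or.inr hp, hRD hp⟩
    · rintro ⟨hp | hp, hd⟩
      · exact absurd hd (hIR p hp)
      · exact hp
end

section
/- Let (D, IC) be a database. Every element N of M^DB = { N | N ≥_k H^D ⊕ M for some two-valued model M of IC } is a three-valued model of D ∪ IC (viewing each atom of D as a formula). -/
lemma eval3_of_sat2 {α : Type} (M : Set α) (N : α → Three)
    (h : ∀ p, (p ∈ M → N p ≠ Three.ff) ∧ (p ∉ M → N p ≠ Three.tt)) :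
    ∀ φ : Fmla α, (sat2 M φ → eval3 N φ ≠ Three.ff) ∧ (¬ sat2 M φ → eval3 N φ ≠ Three.tt) := by
  intro φ
  induction φ with
  | atom p => exact h p
  | neg φ ih =>
    constructor
    · intro hs
      simp only [eval3]
      have := ih.2 hs
      cases hv : eval3 N φ <;> simp_all [Three.neg3]
    · intro hs
      have : sat2 M φ := by by_contra hc; exact hs hc
      have := ih.1 this
      simp only [eval3]
      cases hv : eval3 N φ <;> simp_all [Three.neg3]
  | conj φ ψ ihφ ihψ =>
    constructor
    · rintro ⟨h1, h2⟩
      have a1 := ihφ.1 h1; have a2 := ihψ.1 h2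
      simp only [eval3, Three.and3]
      split <;> assumption
    · intro hs
      simp only [eval3, Three.and3]
      rw [sat2] at hs
      push_neg at hs
      by_cases hφ : sat2 M φ
      · have := ihψ.2 (hs hφ)
        cases h1 : eval3 N φ <;> cases h2 : eval3 N ψ <;> simp_all [Three.rank]
      · have := ihφ.2 hφ
        cases h1 : eval3 N φ <;> cases h2 : eval3 N ψ <;> simp_all [Three.rank]
  | disj φ ψ ihφ ihψ =>
    constructor
    · intro hs
      simp only [eval3, Three.or3]
      cases hs with
      | inl h1 =>
        have := ihφ.1 h1
        cases h1 : eval3 N φ <;> cases h2 : eval3 N ψ <;> simp_all [Three.rank]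
      | inr h2 =>
        have := ihψ.1 h2
        cases h1 : eval3 N φ <;> cases h2 : eval3 N ψ <;> simp_all [Three.rank]
    · intro hs
      rw [sat2] at hs
      push_neg at hs
      have a1 := ihφ.2 hs.1; have a2 := ihψ.2 hs.2
      simp only [eval3, Three.or3]
      split <;> assumption

/-- every element of `M^DB` is a three-valued model of `D ∪ IC`. -/
theorem MDB_models3 {α : Type} (D : Set α) (IC : Set (Fmla α))
    (hDB : IsDatabase D IC) (N : α → Three) (hN : N ∈ MDB D IC) :
    models3 N (atomsOf D ∪ IC) := by
  obtain ⟨M, hM, hk⟩ := hN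
  have hMN : ∀ p, (p ∈ M → N p ≠ Three.ff) ∧ (p ∉ M → N p ≠ Three.tt) := by
    intro p
    rcases hk p with h | h
    · rw [← h]
      by_cases hD : p ∈ D <;> by_cases hMp : p ∈ M <;>
        simp [herbOplus, toThree, Three.oplus, hD, hMp]
    · simp [h]
  intro φ hφ
  cases hφ with
  | inl hφ =>
    obtain ⟨p, hp, rfl⟩ := hφ
    show eval3 N (Fmla.atom p) ≠ Three.ff
    simp only [eval3]
    rcases hk p with h | h
    · rw [← h]
      by_cases hMp : p ∈ M <;>
        simp [herbOplus, toThree, Three.oplus, hp, hMp]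
    · simp [h]
  | inr hφ =>
    exact (eval3_of_sat2 M N hMN φ).1 (hM φ hφ)
end
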